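/- Starting from any configuration satisfying the state invariant, if there is no food particle in the system thereafter, then under the Adaptive α-Compression Algorithm all particles switch to the dispersion state within an expected number of steps polynomial in the number of particles and lattice size. -/

import Mathlib

open scoped Classical ENNReal

noncomputable section

/-! ## The Adaptive α-Compression Algorithm of the paper, formalized.

Particles occupy distinct vertices of a `L × L` triangular-lattice torus (`N = L²` vertices).
Each occupied vertex carries one of six states: dispersion `D`, dispersion-token `DT`, or a
compression state `C g f` where `g` is the growth-token bit and `f` the food-adjacency bit
(`C false false = C`, `C true false = C_G`, `C false true = C_F`, `C true true = C_{GF}`).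
A single immobile food particle may occupy one (otherwise empty) vertex.

At each discrete step one occupied vertex is chosen uniformly at random and activated: it
performs the state-change step followed by the movement step of the algorithm, exactly as
described in the paper (with a fixed constant `p < 1/6` and bias parameter `λ > 1`).
The one-step transition is formalized as a `PMF` on configurations. -/

/-- Vertices of the `L × L` triangular-lattice torus. -/
abbrev V (L : ℕ) := ZMod L × ZMod L

/-- The six lattice directions. -/
def dirList (L : ℕ) : List (V L) :=
  [(1, 0), (-1, 0), (0, 1), (0, -1), (1, 1), (-1, -1)]

def dirFinset (L : ℕ) : Finset (V L) := (dirList L).toFinset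

lemma dirFinset_nonempty (L : ℕ) : (dirFinset L).Nonempty :=
  ⟨(1, 0), by simp [dirFinset, dirList]⟩

/-- A `PMF` which assigns probability `p` to `true` and `1 - p` to `false`
(the older Mathlib `PMF.bernoulli`, with `p : ℝ≥0∞`). -/
def bernoulliENN (p : ℝ≥0∞) (h : p ≤ 1) : PMF Bool :=
  PMF.ofFintype (fun b => cond b p (1 - p)) (by simp [h])

/-- The neighbours of a vertex. -/
def nbrs {L : ℕ} (v : V L) : Finset (V L) := (dirFinset L).image (fun d => v + d)

/-- Particle states: dispersion `D`, dispersion token `DT`, and the four compression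
states `C (growth bit) (food bit)`. -/
inductive CState : Type
  | D : CState
  | DT : CState
  | C : Bool → Bool → CState
deriving DecidableEq

/-- A configuration: each vertex is empty or holds a particle with its state; a food
particle may occupy one vertex. -/
structure Conf (L : ℕ) : Type where
  occ : V L → Option CState
  food : Option (V L)

variable {L : ℕ}

/-- `v` holds a particle in a compression state or the dispersion-token state. -/
def isTokenSite (c : Conf L) (v : V L) : Prop := ∃ s, c.occ v = some s ∧ s ≠ CState.D

/-- Cluster particles: compression-state particles, `DT`-state particles, and the food. -/
def isClusterSite (c : Conf L) (v : V L) : Prop := c.food = some v ∨ isTokenSite c v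

/-- `v` is adjacent to the food particle. -/
def adjFood (c : Conf L) (v : V L) : Prop := ∃ f, c.food = some f ∧ f ∈ nbrs v

/-- Connectivity within the subgraph induced on compression-state and `DT`-state
particles (the food particle belongs to no component). -/
def compReach (c : Conf L) : V L → V L → Prop :=
  Relation.ReflTransGen (fun a b => isTokenSite c a ∧ isTokenSite c b ∧ b ∈ nbrs a)

/-- The state invariant: every component (of compression-state and `DT`-state particles)
contains a particle in state `C_{GF}`, `C_F` or `DT`. -/
def StateInvariant (c : Conf L) : Prop :=
  ∀ v, isTokenSite c v → ∃ w, compReach c v w ∧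
    (c.occ w = some CState.DT ∨ ∃ g, c.occ w = some (CState.C g true))

def setSt (c : Conf L) (v : V L) (s : CState) : Conf L :=
  ⟨Function.update c.occ v (some s), c.food⟩

/-- Switch `v` to the dispersion state and all its compression-state neighbours to `DT`. -/
def spreadDT (c : Conf L) (v : V L) : Conf L :=
  ⟨fun w => if w = v then some CState.D
      else if w ∈ nbrs v ∧ ∃ g f, c.occ w = some (CState.C g f) then some CState.DT
      else c.occ w,
    c.food⟩

/-- Remove a growth token. -/
def clearG : Option CState → Option CState
  | some (CState.C _ f) => some (CState.C false f)
  | o => o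

def moveP (c : Conf L) (v w : V L) (s : CState) : Conf L :=
  ⟨Function.update (Function.update c.occ v none) w (some s), c.food⟩

/-- Step 1 (state change) of the algorithm, for the activated particle at `v`. -/
def stateChange (p : ℝ≥0∞) (hp : p ≤ 1) (c : Conf L) (v : V L) : PMF (Conf L) :=
  match c.occ v with
  | none => PMF.pure c
  | some CState.D =>
      if adjFood c v then
        (bernoulliENN p hp).bind fun b =>
          PMF.pure (if b then setSt c v (CState.C false true) else c)
      else if hG : ((nbrs v).filter fun w => ∃ f, c.occ w = some (CState.C true f)).Nonempty then
        (PMF.uniformOfFinset _ hG).bind fun w =>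
          (bernoulliENN p hp).bind fun b =>
            PMF.pure (if b then
                setSt ⟨Function.update c.occ w (clearG (c.occ w)), c.food⟩ v
                  (CState.C false false)
              else c)
      else PMF.pure c
  | some CState.DT => PMF.pure (spreadDT c v)
  | some (CState.C g f) =>
      if (f = true ∧ ¬ adjFood c v) ∨ (f = false ∧ adjFood c v) ∨
          (adjFood c v ∧ ∃ w fd, c.food = some fd ∧ w ∈ nbrs v ∧ w ∈ nbrs fd ∧
            ∃ g', c.occ w = some (CState.C g' false)) then
        PMF.pure (spreadDT c v)
      else if g then
        (PMF.uniformOfFinset (dirFinset L) (dirFinset_nonempty L)).bind fun d =>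
          PMF.pure
            (match c.occ (v + d) with
              | some (CState.C false f') =>
                  setSt (setSt c v (CState.C false f)) (v + d) (CState.C true f')
              | _ => c)
      else if adjFood c v then
        (bernoulliENN p hp).bind fun b =>
          PMF.pure (if b then setSt c v (CState.C true f) else c)
      else PMF.pure c

/-- `N(ℓ ∪ ℓ')`. -/
def NNset (v w : V L) : Set (V L) := ((nbrs v : Set (V L)) ∪ (nbrs w : Set (V L))) \ {v, w}

/-- Connectivity between cluster particles through a set `A`. -/
def connWithin (c : Conf L) (A : Set (V L)) : V L → V L → Prop :=
  Relation.ReflTransGen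
    (fun a b => a ∈ A ∧ b ∈ A ∧ isClusterSite c a ∧ isClusterSite c b ∧ b ∈ nbrs a)

/-- Property 1 of valid compression moves. -/
def MoveProp1 (c : Conf L) (v w : V L) : Prop :=
  (nbrs v ∩ nbrs w).Nonempty ∧
    ∀ x ∈ NNset v w, isClusterSite c x →
      ∃ y ∈ nbrs v ∩ nbrs w, isClusterSite c y ∧ connWithin c (NNset v w) x y

/-- Property 2 of valid compression moves. -/
def MoveProp2 (c : Conf L) (v w : V L) : Prop :=
  nbrs v ∩ nbrs w = ∅ ∧
  (∃ x ∈ nbrs v, isClusterSite c x) ∧ (∃ x ∈ nbrs w, isClusterSite c x) ∧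
  (∀ x ∈ ((nbrs v : Set (V L)) \ {w}), ∀ y ∈ ((nbrs v : Set (V L)) \ {w}),
      isClusterSite c x → isClusterSite c y →
        connWithin c ((nbrs v : Set (V L)) \ {w}) x y) ∧
  (∀ x ∈ ((nbrs w : Set (V L)) \ {v}), ∀ y ∈ ((nbrs w : Set (V L)) \ {v}),
      isClusterSite c x → isClusterSite c y →
        connWithin c ((nbrs w : Set (V L)) \ {v}) x y)

/-- A valid compression move from `v` to the adjacent empty non-food site `w`. -/
def validMove (c : Conf L) (v w : V L) : Prop :=
  w ∈ nbrs v ∧ c.occ w = none ∧ c.food ≠ some w ∧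
    ((nbrs v).filter fun x => isClusterSite c x).card < 5 ∧
    (MoveProp1 c v w ∨ MoveProp2 c v w)

/-- `e(σ') - e(σ)`: the change in the number of edges between cluster particles caused by
moving the particle from `v` to `w` (computable locally). -/
def moveDelta (c : Conf L) (v w : V L) : ℤ :=
  (((nbrs w).filter fun x => x ≠ v ∧ isClusterSite c x).card : ℤ) -
    (((nbrs v).filter fun x => x ≠ w ∧ isClusterSite c x).card : ℤ)

/-- Step 2 (movement) of the algorithm for the activated particle at `v`: dispersion
particles perform a simple-exclusion random-walk step; compression particles perform a
Metropolis-filtered valid compression move with probability `min(1, λ^{e(σ')-e(σ)})`, and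
afterwards set their food bit according to food adjacency. -/
def movement (lam : ℝ) (c : Conf L) (v : V L) : PMF (Conf L) :=
  match c.occ v with
  | some CState.D =>
      (PMF.uniformOfFinset (dirFinset L) (dirFinset_nonempty L)).bind fun d =>
        PMF.pure
          (if c.occ (v + d) = none ∧ c.food ≠ some (v + d) then moveP c v (v + d) CState.D
           else c)
  | some (CState.C g _) =>
      (PMF.uniformOfFinset (dirFinset L) (dirFinset_nonempty L)).bind fun d =>
        if validMove c v (v + d) then
          (bernoulliENN (min 1 (ENNReal.ofReal (lam ^ moveDelta c v (v + d))))
              (min_le_left _ _)).bind fun b =>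
            PMF.pure
              (if b then
                  moveP c v (v + d) (CState.C g (if adjFood c (v + d) then true else false))
                else setSt c v (CState.C g (if adjFood c v then true else false)))
        else PMF.pure (setSt c v (CState.C g (if adjFood c v then true else false)))
  | _ => PMF.pure c

variable [NeZero L]

/-- The set of occupied (particle) vertices. -/
def occupiedSet (c : Conf L) : Finset (V L) :=
  Finset.univ.filter fun v => (c.occ v).isSome

/-- The number of particles. -/
def pcount (c : Conf L) : ℕ := (occupiedSet c).card

/-- One step of the Adaptive α-Compression Algorithm: a uniformly random particle is
activated and performs its state-change step followed by its movement step.  The food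
particle never changes during algorithm steps. -/
def compStep (p : ℝ≥0∞) (hp : p ≤ 1) (lam : ℝ) (c : Conf L) : PMF (Conf L) :=
  if h : (occupiedSet c).Nonempty then
    (PMF.uniformOfFinset _ h).bind fun v =>
      (stateChange p hp c v).bind fun c' => movement lam c' v
  else PMF.pure c

/-- `surviveP step goal t a` is the probability that a Markov chain with one-step kernel
`step` started at `a` has not visited the goal set within the first `t` steps. -/
def surviveP {α : Type*} (step : α → PMF α) (goal : α → Prop) : ℕ → α → ℝ≥0∞
  | 0, a => if goal a then 0 else 1
  | t + 1, a => if goal a then 0 else ∑' b, step a b * surviveP step goal t b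

/-- The expected hitting time of the goal set for the Markov chain with kernel `step`
started at `a`: `E[T] = ∑_{t ≥ 0} P(T > t)` (in `ℝ≥0∞`). -/
def ehit {α : Type*} (step : α → PMF α) (goal : α → Prop) (a : α) : ℝ≥0∞ :=
  ∑' t, surviveP step goal t a

end

/-- All particles are in the dispersion state. -/
def AllDispersed {L : ℕ} (c : Conf L) : Prop := ∀ v s, c.occ v = some s → s = CState.D

/-!
Weigh every particle by its state: `0` for `D`, `1` for `DT`, `C` and `C_F`, and `2` for a
particle holding a growth token, and let `Φ` be the total weight. Without food no step raises
`Φ`: growth tokens are passed on or consumed by a `D`-particle turning into a `C`-particle,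
moves only relocate particles, and activating a particle in state `DT`, `C_F` or `C_{GF}`
(a witness) turns it into `D` and its compression neighbours into `DT`, which lowers `Φ`.
The same steps preserve the state invariant; for a compression move, Property 1 reconnects the
moved particle to its former neighbours. Hence while some particle is not dispersed the
invariant provides a witness, which is activated with probability at least `1 / L²`, so
`L² Φ` is a Lyapunov function and the expected dispersion time is at most `L² Φ ≤ 2 L⁴`.
-/

section Lattice

variable {L : ℕ}

lemma mem_nbrs {v w : V L} : w ∈ nbrs v ↔ ∃ d ∈ dirFinset L, v + d = w :=
  Finset.mem_image

lemma neg_mem_dirFinset {d : V L} (hd : d ∈ dirFinset L) : -d ∈ dirFinset L := by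
  simp only [dirFinset, dirList, List.mem_toFinset, List.mem_cons, List.not_mem_nil,
    or_false] at hd ⊢
  rcases hd with rfl | rfl | rfl | rfl | rfl | rfl <;> simp

lemma mem_nbrs_comm {v w : V L} (h : w ∈ nbrs v) : v ∈ nbrs w := by
  obtain ⟨d, hd, rfl⟩ := mem_nbrs.1 h
  exact mem_nbrs.2 ⟨-d, neg_mem_dirFinset hd, by abel⟩

lemma notMem_nbrs_self (h1 : (1 : ZMod L) ≠ 0) (v : V L) : v ∉ nbrs v := by
  intro hv
  obtain ⟨d, hd, hvd⟩ := mem_nbrs.1 hv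
  obtain rfl : d = 0 := by simpa using hvd
  simp [dirFinset, dirList, Prod.ext_iff, h1, h1.symm] at hd

lemma one_ne_zero_of_ne {v w : V L} (h : v ≠ w) : (1 : ZMod L) ≠ 0 := fun h1 =>
  have := subsingleton_of_zero_eq_one h1.symm
  h (Subsingleton.elim v w)

lemma nbrs_inter_nonempty {v w : V L} (h : w ∈ nbrs v) : (nbrs v ∩ nbrs w).Nonempty := by
  obtain ⟨d, hd, rfl⟩ := mem_nbrs.1 h
  suffices ∃ e ∈ dirFinset L, e - d ∈ dirFinset L by
    obtain ⟨e, he, hed⟩ := this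
    exact ⟨v + e, Finset.mem_inter.2 ⟨mem_nbrs.2 ⟨e, he, rfl⟩, mem_nbrs.2 ⟨e - d, hed, by abel⟩⟩⟩
  simp only [dirFinset, dirList, List.mem_toFinset, List.mem_cons, List.not_mem_nil,
    or_false] at hd ⊢
  rcases hd with rfl | rfl | rfl | rfl | rfl | rfl
  · exact ⟨(1, 1), by simp⟩
  · exact ⟨(-1, -1), by simp⟩
  · exact ⟨(1, 1), by simp⟩
  · exact ⟨(-1, -1), by simp⟩
  · exact ⟨(1, 0), by simp⟩
  · exact ⟨(-1, 0), by simp⟩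

end Lattice

section Expectation

variable {α β : Type*}

lemma PMF.tsum_mul_le {K : PMF α} {g : α → ℝ≥0∞} {M : ℝ≥0∞} (h : ∀ b ∈ K.support, g b ≤ M) :
    ∑' b, K b * g b ≤ M :=
  calc ∑' b, K b * g b ≤ ∑' b, K b * M := ENNReal.tsum_le_tsum fun b => by
        by_cases hb : K b = 0
        · simp [hb]
        · exact mul_le_mul_right (h b ((K.mem_support_iff b).2 hb)) _
    _ = M := by rw [ENNReal.tsum_mul_right, K.tsum_coe, one_mul]

lemma PMF.tsum_bind_mul (p : PMF α) (f : α → PMF β) (g : β → ℝ≥0∞) :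
    ∑' b, p.bind f b * g b = ∑' a, p a * ∑' b, f a b * g b := by
  simp only [PMF.bind_apply, ← ENNReal.tsum_mul_right, ← ENNReal.tsum_mul_left, mul_assoc]
  exact ENNReal.tsum_comm

lemma PMF.tsum_uniformOfFinset_bind_mul {s : Finset α} (hs : s.Nonempty) (f : α → PMF β)
    (g : β → ℝ≥0∞) :
    ∑' b, (PMF.uniformOfFinset s hs).bind f b * g b =
      (s.card : ℝ≥0∞)⁻¹ * ∑ a ∈ s, ∑' b, f a b * g b := by
  rw [PMF.tsum_bind_mul, tsum_eq_sum (s := s) fun a ha => by simp [ha], Finset.mul_sum]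
  exact Finset.sum_congr rfl fun a ha => by simp [PMF.uniformOfFinset_apply, ha]

lemma one_add_inv_card_mul_sum_le {ι : Type*} {s : Finset ι} {E : ι → ℝ≥0∞} {M K : ℝ≥0∞}
    {w : ι} (hw : w ∈ s) (hE : ∀ v ∈ s, E v ≤ M) (hEw : E w + K ≤ M)
    (hK : (s.card : ℝ≥0∞) ≤ K) :
    1 + (s.card : ℝ≥0∞)⁻¹ * ∑ v ∈ s, E v ≤ M := by
  have hn0 : (s.card : ℝ≥0∞) ≠ 0 := by simpa using Finset.ne_empty_of_mem hw
  have hntop : (s.card : ℝ≥0∞) ≠ ⊤ := ENNReal.natCast_ne_top _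
  have hsum : (s.card : ℝ≥0∞) + ∑ v ∈ s, E v ≤ s.card * M := by
    have hrest : ∑ v ∈ s.erase w, E v ≤ ((s.card - 1 : ℕ) : ℝ≥0∞) * M := by
      simpa [Finset.card_erase_of_mem hw] using
        Finset.sum_le_card_nsmul (s.erase w) E M fun v hv => hE v (Finset.mem_of_mem_erase hv)
    have hcard : ((s.card - 1 : ℕ) : ℝ≥0∞) * M + M = s.card * M := by
      rw [← add_one_mul, ← Nat.cast_add_one, Nat.sub_add_cancel (Finset.card_pos.2 ⟨w, hw⟩)]
    calc (s.card : ℝ≥0∞) + ∑ v ∈ s, E v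
        = ∑ v ∈ s.erase w, E v + (E w + s.card) := by
          rw [← Finset.sum_erase_add _ _ hw]; ring
      _ ≤ ((s.card - 1 : ℕ) : ℝ≥0∞) * M + M := add_le_add hrest (hEw.trans' (by gcongr))
      _ = s.card * M := hcard
  calc 1 + (s.card : ℝ≥0∞)⁻¹ * ∑ v ∈ s, E v
      = (s.card : ℝ≥0∞)⁻¹ * (s.card + ∑ v ∈ s, E v) := by
        rw [mul_add, ENNReal.inv_mul_cancel hn0 hntop]
    _ ≤ (s.card : ℝ≥0∞)⁻¹ * (s.card * M) := by gcongr
    _ = M := by rw [← mul_assoc, ENNReal.inv_mul_cancel hn0 hntop, one_mul]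

end Expectation

section HittingTime

variable {α : Type*} {step : α → PMF α} {goal : α → Prop}

lemma surviveP_of_goal {a : α} (h : goal a) (t : ℕ) : surviveP step goal t a = 0 := by
  cases t <;> simp [surviveP, h]

lemma ehit_le_of_drift (Good : α → Prop) (V : α → ℝ≥0∞)
    (hdrift : ∀ a, Good a → ¬ goal a → 1 + ∑' b, step a b * V b ≤ V a)
    (hgood : ∀ a, Good a → ¬ goal a → ∀ b ∈ (step a).support, Good b)
    {a : α} (ha : Good a) : ehit step goal a ≤ V a := by
  suffices h : ∀ t a, Good a → ∑ s ∈ Finset.range t, surviveP step goal s a ≤ V a by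
    rw [ehit, ENNReal.tsum_eq_iSup_nat]
    exact iSup_le fun t => h t a ha
  intro t
  induction t with
  | zero => simp
  | succ t ih =>
    intro a ha
    by_cases hg : goal a
    · simp [surviveP_of_goal hg]
    calc ∑ s ∈ Finset.range (t + 1), surviveP step goal s a
        = 1 + ∑' b, step a b * ∑ s ∈ Finset.range t, surviveP step goal s b := by
          simp only [Finset.sum_range_succ', surviveP, if_neg hg, Finset.mul_sum]
          rw [Summable.tsum_finsetSum fun _ _ => ENNReal.summable, add_comm]
      _ ≤ 1 + ∑' b, step a b * V b := by
          refine add_le_add_right (ENNReal.tsum_le_tsum fun b => ?_) 1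
          by_cases hb : b ∈ (step a).support
          · exact mul_le_mul_right (ih b (hgood a ha hg b hb)) _
          · simp [not_not.1 ((PMF.mem_support_iff _ _).not.1 hb)]
      _ ≤ V a := hdrift a ha hg

end HittingTime

section Potential

variable {L : ℕ}

def isWitness (c : Conf L) (w : V L) : Prop :=
  c.occ w = some CState.DT ∨ ∃ g, c.occ w = some (CState.C g true)

/-- A growth token weighs as much as a particle, so that a `D`-particle consuming one
leaves the total weight unchanged. -/
def wt : Option CState → ℕ
  | none => 0
  | some CState.D => 0
  | some CState.DT => 1
  | some (CState.C g _) => if g then 2 else 1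

lemma wt_le_two (o : Option CState) : wt o ≤ 2 := by
  rcases o with _ | _ | _ | ⟨_ | _, _⟩ <;> simp [wt]

lemma wt_pos_of_isTokenSite {c : Conf L} {x : V L} (h : isTokenSite c x) :
    0 < wt (c.occ x) := by
  obtain ⟨s, hs, hD⟩ := h
  rw [hs]
  rcases s with _ | _ | ⟨_ | _, _⟩ <;> simp_all [wt]

variable [NeZero L]

def Phi (c : Conf L) : ℕ := ∑ x : V L, wt (c.occ x)

lemma Phi_le (c : Conf L) : Phi c ≤ 2 * (L * L) := by
  calc Phi c ≤ Finset.univ.card • 2 := Finset.sum_le_card_nsmul _ _ _ fun x _ => wt_le_two _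
    _ = 2 * (L * L) := by simp [mul_comm]

lemma Phi_update {c c' : Conf L} {v : V L} {o : Option CState}
    (h : c'.occ = Function.update c.occ v o) : Phi c' + wt (c.occ v) = Phi c + wt o := by
  simp only [Phi, h, Function.apply_update (fun _ => wt)]
  rw [Finset.sum_update_of_mem (Finset.mem_univ v), ← Finset.add_sum_erase _ _ (Finset.mem_univ v),
    Finset.sdiff_singleton_eq_erase]
  ring

end Potential

section Invariant

variable {L : ℕ}

lemma compReach_symm {c : Conf L} {x y : V L} (h : compReach c x y) : compReach c y x := by
  induction h with
  | refl => exact .refl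
  | tail _ hs ih => exact .head ⟨hs.2.1, hs.1, mem_nbrs_comm hs.2.2⟩ ih

lemma compReach_mono {c c' : Conf L} (h : ∀ x, isTokenSite c x → isTokenSite c' x) {x u : V L}
    (hr : compReach c x u) : compReach c' x u :=
  Relation.ReflTransGen.mono (fun a b hab => ⟨h a hab.1, h b hab.2.1, hab.2.2⟩) x u hr

lemma StateInvariant.transfer {c b : Conf L} (hI : StateInvariant c)
    (htok : ∀ x, isTokenSite c x → isTokenSite b x)
    (hwit : ∀ x, isWitness c x → isWitness b x)
    (hnew : ∀ x, isTokenSite b x → isTokenSite c x ∨ ∃ y ∈ nbrs x, isTokenSite c y) :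
    StateInvariant b := by
  intro x hx
  have reach_witness : ∀ y, isTokenSite c y → ∃ u, compReach b y u ∧ isWitness b u := by
    intro y hy
    obtain ⟨u, hr, hu⟩ := hI y hy
    exact ⟨u, compReach_mono htok hr, hwit u hu⟩
  rcases hnew x hx with hx' | ⟨y, hy, hyc⟩
  · exact reach_witness x hx'
  · obtain ⟨u, hr, hu⟩ := reach_witness y hyc
    exact ⟨u, .head ⟨hx, htok y hyc, hy⟩ hr, hu⟩

lemma StateInvariant.of_isTokenSite_iff {c b : Conf L} (hI : StateInvariant c)
    (htok : ∀ x, isTokenSite b x ↔ isTokenSite c x)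
    (hwit : ∀ x, isWitness c x → isWitness b x) : StateInvariant b :=
  hI.transfer (fun x => (htok x).2) hwit fun x hx => .inl ((htok x).1 hx)

lemma exists_isWitness {c : Conf L} (hI : StateInvariant c) (h : ¬ AllDispersed c) :
    ∃ w, isWitness c w := by
  simp only [AllDispersed, not_forall] at h
  obtain ⟨v, s, hs, hD⟩ := h
  obtain ⟨w, -, hw⟩ := hI v ⟨s, hs, hD⟩
  exact ⟨w, hw⟩

lemma isClusterSite_iff_of_food_eq_none {c : Conf L} {x : V L} (hf : c.food = none) :
    isClusterSite c x ↔ isTokenSite c x := by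
  simp [isClusterSite, hf]

lemma not_adjFood_of_food_eq_none {c : Conf L} (hf : c.food = none) (x : V L) : ¬ adjFood c x := by
  simp [adjFood, hf]

end Invariant

section Transitions

variable {L : ℕ} {c : Conf L} {v w : V L}

lemma setSt_self {s : CState} (h : c.occ v = some s) : setSt c v s = c := by
  rw [setSt, ← h, Function.update_eq_self]

lemma StateInvariant.consumeToken (hI : StateInvariant c) {f : Bool}
    (hv : c.occ v = some CState.D) (hw : c.occ w = some (CState.C true f)) (hnb : w ∈ nbrs v) :
    StateInvariant
      (setSt ⟨Function.update c.occ w (clearG (c.occ w)), c.food⟩ v (CState.C false false)) := by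
  have hwv : w ≠ v := by rintro rfl; simp_all
  refine hI.transfer (fun x hx => ?_) (fun x hx => ?_) fun x hx =>
    if hxv : x = v then .inr ⟨w, hxv ▸ hnb, _, hw, nofun⟩ else .inl ?_ <;>
    by_cases hxv : x = v <;> by_cases hxw : x = w <;> subst_vars <;>
    simp_all [isTokenSite, isWitness, setSt, clearG]

lemma StateInvariant.passToken (hI : StateInvariant c) {f f' : Bool}
    (hv : c.occ v = some (CState.C true f)) (hw : c.occ w = some (CState.C false f')) :
    StateInvariant (setSt (setSt c v (CState.C false f)) w (CState.C true f')) := by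
  have hwv : w ≠ v := by rintro rfl; simp_all
  refine hI.of_isTokenSite_iff (fun x => ?_) (fun x hx => ?_) <;>
    by_cases hxv : x = v <;> by_cases hxw : x = w <;> subst_vars <;>
    simp_all [isTokenSite, isWitness, setSt]

lemma StateInvariant.moveP_D (hI : StateInvariant c)
    (hv : c.occ v = some CState.D) (hw : c.occ w = none) :
    StateInvariant (moveP c v w CState.D) := by
  have hwv : w ≠ v := by rintro rfl; simp_all
  refine hI.of_isTokenSite_iff (fun x => ?_) (fun x hx => ?_) <;>
    by_cases hxv : x = v <;> by_cases hxw : x = w <;> subst_vars <;>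
    simp_all [isTokenSite, isWitness, moveP]

variable [NeZero L]

lemma Phi_consumeToken {f : Bool}
    (hv : c.occ v = some CState.D) (hw : c.occ w = some (CState.C true f)) :
    Phi (setSt ⟨Function.update c.occ w (clearG (c.occ w)), c.food⟩ v
      (CState.C false false)) = Phi c := by
  have hwv : w ≠ v := by rintro rfl; simp_all
  have h₁ := Phi_update (c := ⟨Function.update c.occ w (clearG (c.occ w)), c.food⟩) (v := v)
    (c' := setSt _ v (CState.C false false)) rfl
  have h₂ := Phi_update (c := c) (v := w)
    (c' := ⟨Function.update c.occ w (clearG (c.occ w)), c.food⟩) rfl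
  simp only [Function.update_of_ne hwv.symm, hv, hw, clearG, wt, Bool.false_eq_true, if_true,
    if_false] at h₁ h₂ ⊢
  omega

lemma Phi_passToken {f f' : Bool}
    (hv : c.occ v = some (CState.C true f)) (hw : c.occ w = some (CState.C false f')) :
    Phi (setSt (setSt c v (CState.C false f)) w (CState.C true f')) = Phi c := by
  have hwv : w ≠ v := by rintro rfl; simp_all
  have h₁ := Phi_update (c := setSt c v (CState.C false f)) (v := w)
    (c' := setSt (setSt c v (CState.C false f)) w (CState.C true f')) rfl
  have h₂ := Phi_update (c := c) (v := v) (c' := setSt c v (CState.C false f)) rfl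
  simp only [setSt, Function.update_of_ne hwv, hv, hw, wt, Bool.false_eq_true, if_true,
    if_false] at h₁ h₂ ⊢
  omega

lemma Phi_moveP {s : CState} (hv : c.occ v = some s) (hw : c.occ w = none) :
    Phi (moveP c v w s) = Phi c := by
  have hwv : w ≠ v := by rintro rfl; simp_all
  have h₁ := Phi_update (c := ⟨Function.update c.occ v none, c.food⟩) (v := w)
    (c' := moveP c v w s) rfl
  have h₂ := Phi_update (c := c) (v := v) (c' := ⟨Function.update c.occ v none, c.food⟩) rfl
  simp only [Function.update_of_ne hwv, hv, hw, wt] at h₁ h₂ ⊢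
  omega

end Transitions

section Spread

variable {L : ℕ} {c : Conf L} {v x : V L}

lemma isTokenSite_spreadDT_iff (hx : x ≠ v) :
    isTokenSite (spreadDT c v) x ↔ isTokenSite c x := by
  simp only [isTokenSite, spreadDT, if_neg hx]
  split_ifs with h
  · obtain ⟨-, g, f, hc⟩ := h
    simp [hc]
  · rfl

lemma not_isTokenSite_spreadDT_self : ¬ isTokenSite (spreadDT c v) v := by
  simp [isTokenSite, spreadDT]

lemma isWitness_spreadDT (hx : x ≠ v) (h : isWitness c x ∨ x ∈ nbrs v ∧ isTokenSite c x) :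
    isWitness (spreadDT c v) x := by
  simp only [isWitness, spreadDT, if_neg hx]
  split_ifs with hC
  · exact .inl rfl
  · rcases h with h | ⟨hnb, s, hs, hD⟩
    · exact h
    · rcases s with _ | _ | ⟨g, f⟩
      · exact absurd rfl hD
      · exact .inl hs
      · exact absurd ⟨hnb, g, f, hs⟩ hC

/-- A path leaving `v`'s component is cut just before `v`, at a neighbour of `v` that has
turned into `DT`. -/
lemma exists_compReach_spreadDT {u : V L} (hr : compReach c x u) (hx : x ≠ v) :
    ∃ u', compReach (spreadDT c v) x u' ∧ (u' = u ∧ u ≠ v ∨ isWitness (spreadDT c v) u') := by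
  induction hr with
  | refl => exact ⟨x, .refl, .inl ⟨rfl, hx⟩⟩
  | @tail m u _ hmu ih =>
    obtain ⟨hm, hu, hnb⟩ := hmu
    obtain ⟨m', hxm', ⟨rfl, hmv⟩ | hw⟩ := ih
    · by_cases huv : u = v
      · subst huv
        exact ⟨m', hxm', .inr (isWitness_spreadDT hmv (.inr ⟨mem_nbrs_comm hnb, hm⟩))⟩
      · exact ⟨u, hxm'.tail ⟨(isTokenSite_spreadDT_iff hmv).2 hm,
          (isTokenSite_spreadDT_iff huv).2 hu, hnb⟩, .inl ⟨rfl, huv⟩⟩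
    · exact ⟨m', hxm', .inr hw⟩

lemma StateInvariant.spreadDT (hI : StateInvariant c) : StateInvariant (spreadDT c v) := by
  intro x hx
  have hxv : x ≠ v := by rintro rfl; exact not_isTokenSite_spreadDT_self hx
  obtain ⟨u, hr, hu⟩ := hI x ((isTokenSite_spreadDT_iff hxv).1 hx)
  obtain ⟨u', hxu', ⟨rfl, huv⟩ | hw⟩ := exists_compReach_spreadDT hr hxv
  · exact ⟨u', hxu', isWitness_spreadDT huv (.inl hu)⟩
  · exact ⟨u', hxu', hw⟩

lemma wt_spreadDT_le (x : V L) : wt ((spreadDT c v).occ x) ≤ wt (c.occ x) := by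
  simp only [spreadDT]
  split_ifs with hxv hC
  · simp [wt]
  · obtain ⟨-, g, f, hc⟩ := hC
    rw [hc]
    cases g <;> simp [wt]
  · rfl

lemma Phi_spreadDT_lt [NeZero L] (hv : isTokenSite c v) : Phi (spreadDT c v) < Phi c :=
  Finset.sum_lt_sum (fun x _ => wt_spreadDT_le x)
    ⟨v, Finset.mem_univ v, by simpa [spreadDT, wt] using wt_pos_of_isTokenSite hv⟩

end Spread

section ValidMove

variable {L : ℕ} {c : Conf L} {v w x : V L} {s : CState}

lemma moveProp1_of_validMove (hvm : validMove c v w) : MoveProp1 c v w :=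
  hvm.2.2.2.2.resolve_right fun h => (nbrs_inter_nonempty hvm.1).ne_empty h.1

lemma isTokenSite_moveP_iff (hxv : x ≠ v) (hxw : x ≠ w) :
    isTokenSite (moveP c v w s) x ↔ isTokenSite c x := by
  simp [isTokenSite, moveP, hxv, hxw]

lemma ne_of_isTokenSite_of_occ_eq_none (hx : isTokenSite c x) (hw : c.occ w = none) : x ≠ w := by
  rintro rfl
  obtain ⟨_, h, -⟩ := hx
  simp_all

variable (hf : c.food = none) (hvw : v ≠ w) (hvm : validMove c v w) (hs : s ≠ CState.D)
include hf hvw hvm hs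

/-- Property 1 links every former neighbour of `v` to a common neighbour of `v` and `w`. -/
lemma compReach_moveP_of_mem_nbrs {a : V L} (ha : a ∈ nbrs v) (hat : isTokenSite c a) :
    compReach (moveP c v w s) w a := by
  have h1 := one_ne_zero_of_ne hvw
  have hav : a ≠ v := by rintro rfl; exact notMem_nbrs_self h1 a ha
  have haw := ne_of_isTokenSite_of_occ_eq_none hat hvm.2.1
  obtain ⟨y, hy, hyc, hay⟩ := (moveProp1_of_validMove hvm).2 a
    ⟨.inl (Finset.mem_coe.2 ha), by simp [hav, haw]⟩ (.inr hat)
  obtain ⟨hyv, hyw⟩ := Finset.mem_inter.1 hy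
  have hyt : isTokenSite (moveP c v w s) y :=
    (isTokenSite_moveP_iff (by rintro rfl; exact notMem_nbrs_self h1 y hyv)
      (by rintro rfl; exact notMem_nbrs_self h1 y hyw)).2
      ((isClusterSite_iff_of_food_eq_none hf).1 hyc)
  have hwy : compReach (moveP c v w s) w y := .single ⟨⟨s, by simp [moveP], hs⟩, hyt, hyw⟩
  refine hwy.trans (compReach_symm (Relation.ReflTransGen.mono (fun p q hpq => ?_) a y hay))
  obtain ⟨hp, hq, hpc, hqc, hpq⟩ := hpq
  have tok : ∀ z ∈ NNset v w, isClusterSite c z → isTokenSite (moveP c v w s) z :=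
    fun z hz hzc => (isTokenSite_moveP_iff (by rintro rfl; simp [NNset] at hz)
      (by rintro rfl; simp [NNset] at hz)).2 ((isClusterSite_iff_of_food_eq_none hf).1 hzc)
  exact ⟨tok p hp hpc, tok q hq hqc, hpq⟩

lemma compReach_moveP {u : V L} (hr : compReach c x u) :
    compReach (moveP c v w s) (Function.update id v w x) (Function.update id v w u) := by
  refine Relation.ReflTransGen.lift' _ (fun m u ⟨hm, hu, hmu⟩ => ?_) x u hr
  show compReach _ (Function.update id v w m) (Function.update id v w u)
  by_cases hmv : m = v <;> by_cases huv : u = v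
  · rw [hmv, huv]
    exact .refl
  · subst hmv
    simpa [huv] using compReach_moveP_of_mem_nbrs hf hvw hvm hs hmu hu
  · subst huv
    simpa [hmv] using
      compReach_symm (compReach_moveP_of_mem_nbrs hf hvw hvm hs (mem_nbrs_comm hmu) hm)
  · have hmw := ne_of_isTokenSite_of_occ_eq_none hm hvm.2.1
    have huw := ne_of_isTokenSite_of_occ_eq_none hu hvm.2.1
    rw [Function.update_of_ne hmv, Function.update_of_ne huv]
    exact .single
      ⟨(isTokenSite_moveP_iff hmv hmw).2 hm, (isTokenSite_moveP_iff huv huw).2 hu, hmu⟩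

lemma StateInvariant.moveP_of_validMove {g : Bool} (hI : StateInvariant c)
    (hv : c.occ v = some (CState.C g false)) :
    StateInvariant (moveP c v w s) := by
  intro x hx
  obtain ⟨x₀, hx₀, rfl⟩ : ∃ x₀, isTokenSite c x₀ ∧ Function.update id v w x₀ = x := by
    by_cases hxw : x = w
    · exact ⟨v, ⟨_, hv, nofun⟩, by simp [hxw]⟩
    · have hxv : x ≠ v := by rintro rfl; simp [isTokenSite, moveP, hvw] at hx
      exact ⟨x, (isTokenSite_moveP_iff hxv hxw).1 hx, by simp [hxv]⟩
  obtain ⟨u, hr, hu⟩ := hI x₀ hx₀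
  have huv : u ≠ v := by rintro rfl; simp [hv] at hu
  have huw : u ≠ w := by rintro rfl; simp [hvm.2.1] at hu
  refine ⟨u, by simpa [huv] using compReach_moveP hf hvw hvm hs hr, ?_⟩
  simpa [isWitness, moveP, huv, huw] using hu

end ValidMove

section Kernel

variable {L : ℕ} {c b : Conf L} {v : V L}

lemma isTokenSite_of_isWitness (h : isWitness c v) : isTokenSite c v := by
  rcases h with h | ⟨g, h⟩ <;> exact ⟨_, h, nofun⟩

lemma mem_support_stateChange {p : ℝ≥0∞} {hp : p ≤ 1} (hf : c.food = none)
    (hb : b ∈ (stateChange p hp c v).support) :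
    b = c ∧ ¬ isWitness c v ∨ b = spreadDT c v ∧ isWitness c v ∨
    (∃ w f, c.occ v = some CState.D ∧ c.occ w = some (CState.C true f) ∧ w ∈ nbrs v ∧
      b = setSt ⟨Function.update c.occ w (clearG (c.occ w)), c.food⟩ v (CState.C false false)) ∨
    (∃ w f, c.occ v = some (CState.C true false) ∧ c.occ w = some (CState.C false f) ∧
      b = setSt (setSt c v (CState.C false false)) w (CState.C true f)) := by
  have hnf := not_adjFood_of_food_eq_none hf
  rcases hocc : c.occ v with _ | _ | _ | ⟨g, _ | _⟩ <;>
    simp only [stateChange, hocc, hnf, if_false, if_true, Bool.false_eq_true, Bool.true_eq_false,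
      not_false_eq_true, and_false, false_and, and_true, or_false] at hb
  · rw [PMF.mem_support_pure_iff] at hb
    exact .inl ⟨hb, by simp [isWitness, hocc]⟩
  · split_ifs at hb with hG
    · obtain ⟨w, hw, b', -, hb⟩ := by simpa only [PMF.mem_support_bind_iff] using hb
      rw [PMF.mem_support_uniformOfFinset_iff, Finset.mem_filter] at hw
      obtain ⟨hnb, f, hwf⟩ := hw
      rw [PMF.mem_support_pure_iff] at hb
      cases b'
      · exact .inl ⟨hb, by simp [isWitness, hocc]⟩
      · exact .inr (.inr (.inl ⟨w, f, rfl, hwf, hnb, hb⟩))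
    · rw [PMF.mem_support_pure_iff] at hb
      exact .inl ⟨hb, by simp [isWitness, hocc]⟩
  · rw [PMF.mem_support_pure_iff] at hb
    exact .inr (.inl ⟨hb, .inl hocc⟩)
  · have hnw : ¬ isWitness c v := by simp [isWitness, hocc]
    cases g
    · rw [if_neg Bool.false_ne_true, PMF.mem_support_pure_iff] at hb
      exact .inl ⟨hb, hnw⟩
    · obtain ⟨d, -, hb⟩ := by simpa only [if_true, PMF.mem_support_bind_iff] using hb
      rw [PMF.mem_support_pure_iff] at hb
      split at hb
      · exact .inr (.inr (.inr ⟨v + d, _, rfl, by assumption, hb⟩))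
      · exact .inl ⟨hb, hnw⟩
  · rw [PMF.mem_support_pure_iff] at hb
    exact .inr (.inl ⟨hb, .inr ⟨g, hocc⟩⟩)

lemma mem_support_movement {lam : ℝ} (hf : c.food = none) (hv : ¬ isWitness c v)
    (hb : b ∈ (movement lam c v).support) :
    b = c ∨ (∃ w, c.occ v = some CState.D ∧ c.occ w = none ∧ b = moveP c v w CState.D) ∨
    (∃ w g, c.occ v = some (CState.C g false) ∧ validMove c v w ∧
      b = moveP c v w (CState.C g false)) := by
  have hnf := not_adjFood_of_food_eq_none hf
  rcases hocc : c.occ v with _ | _ | _ | ⟨g, _ | _⟩ <;>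
    simp only [movement, hocc, hnf, if_false] at hb
  · exact .inl ((PMF.mem_support_pure_iff _ _).1 hb)
  · obtain ⟨d, -, hb⟩ := (PMF.mem_support_bind_iff _ _ _).1 hb
    rw [PMF.mem_support_pure_iff] at hb
    split_ifs at hb with hd
    · exact .inr (.inl ⟨v + d, rfl, hd.1, hb⟩)
    · exact .inl hb
  · exact absurd (.inl hocc) hv
  · obtain ⟨d, -, hb⟩ := (PMF.mem_support_bind_iff _ _ _).1 hb
    split_ifs at hb with hd
    · obtain ⟨b', -, hb⟩ := (PMF.mem_support_bind_iff _ _ _).1 hb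
      rw [PMF.mem_support_pure_iff] at hb
      cases b'
      · exact .inl (hb.trans (setSt_self hocc))
      · exact .inr (.inr ⟨v + d, g, rfl, hd, hb⟩)
    · exact .inl (((PMF.mem_support_pure_iff _ _).1 hb).trans (setSt_self hocc))
  · exact absurd (.inr ⟨g, hocc⟩) hv

end Kernel

section Step

variable {L : ℕ} [NeZero L] {p : ℝ≥0∞} {hp : p ≤ 1} {lam : ℝ} {c b : Conf L} {v : V L}

lemma stateChange_preserves (hf : c.food = none) (hI : StateInvariant c)
    (hb : b ∈ (stateChange p hp c v).support) :
    b.food = none ∧ StateInvariant b ∧ ¬ isWitness b v ∧ Phi b ≤ Phi c ∧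
      (isWitness c v → Phi b < Phi c) := by
  rcases mem_support_stateChange hf hb with
    ⟨rfl, hv⟩ | ⟨rfl, hv⟩ | ⟨w, f, hv, hw, hnb, rfl⟩ | ⟨w, f, hv, hw, rfl⟩
  · exact ⟨hf, hI, hv, le_rfl, fun h => absurd h hv⟩
  · have hlt := Phi_spreadDT_lt (isTokenSite_of_isWitness hv)
    exact ⟨hf, hI.spreadDT, by simp [isWitness, spreadDT], hlt.le, fun _ => hlt⟩
  · exact ⟨hf, hI.consumeToken hv hw hnb, by simp [isWitness, setSt],
      (Phi_consumeToken hv hw).le, by simp [isWitness, hv]⟩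
  · have hvw : v ≠ w := by rintro rfl; simp_all
    exact ⟨hf, hI.passToken hv hw, by simp [isWitness, setSt, hvw],
      (Phi_passToken hv hw).le, by simp [isWitness, hv]⟩

lemma movement_preserves (hf : c.food = none) (hI : StateInvariant c) (hv : ¬ isWitness c v)
    (hb : b ∈ (movement lam c v).support) :
    b.food = none ∧ StateInvariant b ∧ Phi b = Phi c := by
  rcases mem_support_movement hf hv hb with rfl | ⟨w, hv, hw, rfl⟩ | ⟨w, g, hv, hvm, rfl⟩
  · exact ⟨hf, hI, rfl⟩
  · exact ⟨hf, hI.moveP_D hv hw, Phi_moveP hv hw⟩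
  · have hvw : v ≠ w := by rintro rfl; simp_all [validMove]
    exact ⟨hf, hI.moveP_of_validMove hf hvw hvm nofun hv, Phi_moveP hv hvm.2.1⟩

lemma activate_preserves (hf : c.food = none) (hI : StateInvariant c)
    (hb : b ∈ ((stateChange p hp c v).bind fun c' => movement lam c' v).support) :
    b.food = none ∧ StateInvariant b ∧ Phi b ≤ Phi c ∧ (isWitness c v → Phi b < Phi c) := by
  obtain ⟨c', hc', hb⟩ := (PMF.mem_support_bind_iff _ _ _).1 hb
  obtain ⟨hf', hI', hv', hle, hlt⟩ := stateChange_preserves hf hI hc'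
  obtain ⟨hf'', hI'', heq⟩ := movement_preserves hf' hI' hv' hb
  exact ⟨hf'', hI'', heq ▸ hle, heq ▸ hlt⟩

end Step

section Drift

variable {L : ℕ} [NeZero L] {p : ℝ≥0∞} {hp : p ≤ 1} {lam : ℝ} {c : Conf L}

lemma compStep_preserves (hf : c.food = none) (hI : StateInvariant c) {b : Conf L}
    (hb : b ∈ (compStep p hp lam c).support) : b.food = none ∧ StateInvariant b := by
  rw [compStep] at hb
  split_ifs at hb
  · obtain ⟨v, -, hb⟩ := (PMF.mem_support_bind_iff _ _ _).1 hb
    obtain ⟨hbf, hbI, -⟩ := activate_preserves hf hI hb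
    exact ⟨hbf, hbI⟩
  · rw [(PMF.mem_support_pure_iff _ _).1 hb]
    exact ⟨hf, hI⟩

/-- A witness is activated with probability at least `1 / L²`, and then the potential drops. -/
lemma compStep_drift (hf : c.food = none) (hI : StateInvariant c) (hc : ¬ AllDispersed c) :
    1 + ∑' b, compStep p hp lam c b * ((L * L : ℝ≥0∞) * Phi b) ≤ (L * L : ℝ≥0∞) * Phi c := by
  obtain ⟨w, hw⟩ := exists_isWitness hI hc
  have hwc : w ∈ occupiedSet c := by
    rcases hw with h | ⟨g, h⟩ <;> simp [occupiedSet, h]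
  rw [compStep, dif_pos (show (occupiedSet c).Nonempty from ⟨w, hwc⟩),
    PMF.tsum_uniformOfFinset_bind_mul]
  refine one_add_inv_card_mul_sum_le (K := L * L) hwc (fun v _ => ?_) ?_ ?_
  · exact PMF.tsum_mul_le fun b hb => by
      gcongr
      exact_mod_cast (activate_preserves hf hI hb).2.2.1
  · calc _ = ∑' b, ((stateChange p hp c w).bind fun c' => movement lam c' w) b *
            ((L * L : ℝ≥0∞) * (Phi b + 1)) := by
          simp only [mul_add, mul_one, ENNReal.tsum_add, ENNReal.tsum_mul_right, PMF.tsum_coe,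
            one_mul]
      _ ≤ _ := PMF.tsum_mul_le fun b hb => by
          gcongr
          exact_mod_cast (activate_preserves hf hI hb).2.2.2 hw
  · exact_mod_cast (Finset.card_le_univ _).trans_eq (by simp)

end Drift

theorem adaptive_compression_disperses_without_food :
    ∀ (p : ℝ≥0∞) (hp : p ≤ 1), 0 < p → p < 1 / 6 → ∀ lam : ℝ, 1 < lam →
      ∃ C k : ℕ, ∀ (L : ℕ) [NeZero L] (c0 : Conf L),
        c0.food = none → StateInvariant c0 →
        ehit (compStep p hp lam) (fun c : Conf L => AllDispersed c) c0 ≤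
          (C : ℝ≥0∞) * ((pcount c0 + L * L + 2 : ℕ) : ℝ≥0∞) ^ k := by
  intro p hp _ _ lam _
  refine ⟨2, 2, fun L _ c0 hf hI => ?_⟩
  have hhit : ehit (compStep p hp lam) (fun c : Conf L => AllDispersed c) c0 ≤
      (L * L : ℝ≥0∞) * Phi c0 :=
    ehit_le_of_drift (fun c => c.food = none ∧ StateInvariant c) _
      (fun _ ha hg => compStep_drift ha.1 ha.2 hg)
      (fun _ ha _ _ hb => compStep_preserves ha.1 ha.2 hb) ⟨hf, hI⟩
  have hbound : L * L * Phi c0 ≤ 2 * (pcount c0 + L * L + 2) ^ 2 := by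
    have hL : L * L ≤ pcount c0 + L * L + 2 := by omega
    calc L * L * Phi c0 ≤ L * L * (2 * (L * L)) := Nat.mul_le_mul_left _ (Phi_le c0)
      _ = 2 * (L * L) ^ 2 := by ring
      _ ≤ 2 * (pcount c0 + L * L + 2) ^ 2 := by gcongr
  refine hhit.trans ?_
  exact_mod_cast hbound
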